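/- arXiv:math/0301015 — 9 statements merged into one kernel-verified Lean document; each statement's English description precedes it below -/
import Mathlib

section
/- If α : ℤ → ℤ and β : ℤ → ℤ are slopes, then the composition α ∘ β is a slope. -/
/-- A map `f : ℤ → ℤ` is a slope if the set of its defects
`f (m+n) - f m - f n` is finite. -/
def IsSlope (f : ℤ → ℤ) : Prop :=
  {x : ℤ | ∃ m n : ℤ, x = f (m + n) - f m - f n}.Finite

lemma isSlope_bound (f : ℤ → ℤ) (h : IsSlope f) :
    ∃ C : ℤ, 0 ≤ C ∧ ∀ m n : ℤ, |f (m + n) - f m - f n| ≤ C := by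
  have hfin : ((fun x => |x|) '' {x : ℤ | ∃ m n : ℤ, x = f (m + n) - f m - f n}).Finite :=
    h.image _
  obtain ⟨C, hC⟩ := hfin.bddAbove
  refine ⟨C, ?_, ?_⟩
  · have := hC ⟨f (0 + 0) - f 0 - f 0, ⟨0, 0, rfl⟩, rfl⟩
    exact le_trans (abs_nonneg _) this
  · intro m n
    exact hC ⟨f (m + n) - f m - f n, ⟨m, n, rfl⟩, rfl⟩

/-- The composition of two slopes is a slope. -/
theorem comp_isSlope (α β : ℤ → ℤ) (hα : IsSlope α) (hβ : IsSlope β) :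
    IsSlope (α ∘ β) := by
  obtain ⟨Ca, hCa0, hCa⟩ := isSlope_bound α hα
  obtain ⟨Cb, hCb0, hCb⟩ := isSlope_bound β hβ
  -- bound on |α d| for |d| ≤ Cb
  have hIcc : (Finset.Icc (-Cb) Cb).Nonempty := ⟨0, by simp [hCb0, neg_nonpos.mpr hCb0]⟩
  set M := ((Finset.Icc (-Cb) Cb).image fun d => |α d|).max' (hIcc.image _) with hM
  have hMle : ∀ d : ℤ, |d| ≤ Cb → |α d| ≤ M := by
    intro d hd
    apply Finset.le_max'
    exact Finset.mem_image_of_mem _ (by rw [Finset.mem_Icc]; exact abs_le.mp hd)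
  have key : ∀ m n : ℤ, |(α ∘ β) (m + n) - (α ∘ β) m - (α ∘ β) n| ≤ 2 * Ca + M := by
    intro m n
    set d := β (m + n) - β m - β n with hd
    have hdle : |d| ≤ Cb := hCb m n
    have hβmn : β (m + n) = (β m + β n) + d := by omega
    have h1 : |α ((β m + β n) + d) - α (β m + β n) - α d| ≤ Ca := hCa _ _
    have h2 : |α (β m + β n) - α (β m) - α (β n)| ≤ Ca := hCa _ _
    have h3 : |α d| ≤ M := hMle d hdle
    simp only [Function.comp_apply, hβmn]
    have habs1 := abs_le.mp h1
    have habs2 := abs_le.mp h2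
    have habs3 := abs_le.mp h3
    rw [abs_le]
    constructor <;> linarith
  apply Set.Finite.subset (Set.finite_Icc (-(2 * Ca + M)) (2 * Ca + M))
  rintro x ⟨m, n, rfl⟩
  rw [Set.mem_Icc, ← abs_le]
  exact key m n
end

section
/- For any slopes α, β : ℤ → ℤ and all n ∈ ℤ, |α(β(n)) - β(α(n))| ≤ S_α(1 + |β(1)| + S_β) + S_β(1 + |α(1)| + S_α), where S_λ := sup over u,v ∈ ℤ of |λ(u+v) - λ(u) - λ(v)|. In particular α ∘ β and β ∘ α are equivalent slopes. -/
lemma slope_zero_bound (f : ℤ → ℤ) (S : ℤ)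
    (h : ∀ u v : ℤ, |f (u + v) - f u - f v| ≤ S) : |f 0| ≤ S := by
  have h0 := h 0 0
  simp only [add_zero] at h0
  calc |f 0| = |f 0 - f 0 - f 0| := by rw [sub_self, zero_sub, abs_neg]
    _ ≤ S := h0

lemma slope_natmul (f : ℤ → ℤ) (S : ℤ)
    (h : ∀ u v : ℤ, |f (u + v) - f u - f v| ≤ S) (q : ℤ) :
    ∀ k : ℕ, |f (((k : ℤ) + 1) * q) - ((k : ℤ) + 1) * f q| ≤ (k : ℤ) * S := by
  intro k
  induction k with
  | zero => simp
  | succ k ih =>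
    have h1 := h (((k : ℤ) + 1) * q) q
    have e : ((((k : ℕ) + 1 : ℕ) : ℤ) + 1) * q = ((k : ℤ) + 1) * q + q := by
      push_cast; ring
    rw [e]
    have key : f (((k : ℤ) + 1) * q + q) - ((((k : ℕ) + 1 : ℕ) : ℤ) + 1) * f q
        = (f (((k : ℤ) + 1) * q + q) - f (((k : ℤ) + 1) * q) - f q)
          + (f (((k : ℤ) + 1) * q) - ((k : ℤ) + 1) * f q) := by push_cast; ring
    rw [key]
    have := abs_add_le (f (((k : ℤ) + 1) * q + q) - f (((k : ℤ) + 1) * q) - f q)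
      (f (((k : ℤ) + 1) * q) - ((k : ℤ) + 1) * f q)
    push_cast
    linarith

lemma slope_intmul (f : ℤ → ℤ) (S : ℤ)
    (h : ∀ u v : ℤ, |f (u + v) - f u - f v| ≤ S) (m q : ℤ) :
    |f (m * q) - m * f q| ≤ (|m| + 1) * S := by
  have hS : 0 ≤ S := le_trans (abs_nonneg _) (h 0 0)
  rcases lt_trichotomy m 0 with hm | hm | hm
  · -- m < 0
    have hn1 : 1 ≤ -m := by omega
    obtain ⟨k, hk⟩ : ∃ k : ℕ, -m = (k : ℤ) + 1 := ⟨(-m - 1).toNat, by omega⟩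
    have hpos := slope_natmul f S h q k
    rw [← hk] at hpos
    have hsum := h (m * q) (-m * q)
    have e0 : m * q + -m * q = 0 := by ring
    rw [e0] at hsum
    have h0 : |f 0| ≤ S := slope_zero_bound f S h
    have key : f (m * q) - m * f q
        = -(f 0 - f (m * q) - f (-m * q)) - (f (-m * q) - -m * f q) + f 0 := by ring
    rw [key]
    have t1 := abs_add_le (-(f 0 - f (m * q) - f (-m * q)) - (f (-m * q) - -m * f q)) (f 0)
    have t2 := abs_sub (-(f 0 - f (m * q) - f (-m * q))) (f (-m * q) - -m * f q)
    rw [abs_neg] at t2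
    have hmabs : |m| = -m := abs_of_neg hm
    have hk' : (k : ℤ) = -m - 1 := by omega
    rw [hk'] at hpos
    rw [hmabs]
    linarith
  · subst hm
    simpa using le_trans (slope_zero_bound f S h) (by linarith)
  · -- m > 0
    obtain ⟨k, hk⟩ : ∃ k : ℕ, m = (k : ℤ) + 1 := ⟨(m - 1).toNat, by omega⟩
    have hpos := slope_natmul f S h q k
    rw [← hk] at hpos
    have hk' : (k : ℤ) = m - 1 := by omega
    rw [hk'] at hpos
    have hmabs : |m| = m := abs_of_pos hm
    rw [hmabs]
    linarith

lemma slope_lin (f : ℤ → ℤ) (S : ℤ)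
    (h : ∀ u v : ℤ, |f (u + v) - f u - f v| ≤ S) (k : ℤ) :
    |f k| ≤ |k| * |f 1| + (|k| + 1) * S := by
  have h1 := slope_intmul f S h k 1
  rw [mul_one] at h1
  have e : f k = (f k - k * f 1) + k * f 1 := by ring
  calc |f k| = |(f k - k * f 1) + k * f 1| := by rw [← e]
    _ ≤ |f k - k * f 1| + |k * f 1| := abs_add_le _ _
    _ ≤ |k| * |f 1| + (|k| + 1) * S := by rw [abs_mul]; linarith

set_option maxHeartbeats 1000000

/-- Commutativity estimate: if `Sα` and `Sβ` bound the defects of the slopes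
`α` and `β`, then `|α (β n) - β (α n)|` is bounded by
`Sα * (1 + |β 1| + Sβ) + Sβ * (1 + |α 1| + Sα)`; in particular `α ∘ β` and
`β ∘ α` are equivalent slopes. -/
theorem comp_comm_est (α β : ℤ → ℤ) (Sα Sβ : ℤ)
    (hα : ∀ u v : ℤ, |α (u + v) - α u - α v| ≤ Sα)
    (hβ : ∀ u v : ℤ, |β (u + v) - β u - β v| ≤ Sβ) :
    (∀ n : ℤ, |α (β n) - β (α n)| ≤
      Sα * (1 + |β 1| + Sβ) + Sβ * (1 + |α 1| + Sα)) ∧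
    ∃ C : ℤ, ∀ n : ℤ, |(α ∘ β) n - (β ∘ α) n| ≤ C := by
  have hSα : 0 ≤ Sα := le_trans (abs_nonneg _) (hα 0 0)
  have hSβ : 0 ≤ Sβ := le_trans (abs_nonneg _) (hβ 0 0)
  set K := Sα * (1 + |β 1| + Sβ) + Sβ * (1 + |α 1| + Sα) with hKdef
  have hK : 0 ≤ K := by
    have := abs_nonneg (β 1); have := abs_nonneg (α 1)
    nlinarith
  set E := 2 * Sα * Sβ + 2 * Sα + 2 * Sβ with hEdef
  have hE : 0 ≤ E := by nlinarith
  -- crude bound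
  have crude : ∀ N : ℤ, |α (β N) - β (α N)| ≤ K + E := by
    intro N
    rcases eq_or_ne N 0 with rfl | hN
    · have hb0 : |β 0| ≤ Sβ := slope_zero_bound β Sβ hβ
      have ha0 : |α 0| ≤ Sα := slope_zero_bound α Sα hα
      have h1 := slope_lin α Sα hα (β 0)
      have h2 := slope_lin β Sβ hβ (α 0)
      have h3 : |α (β 0) - β (α 0)| ≤ |α (β 0)| + |β (α 0)| := abs_sub _ _
      have p1 := mul_le_mul_of_nonneg_right hb0 (abs_nonneg (α 1))
      have p2 := mul_le_mul_of_nonneg_right hb0 hSα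
      have p3 := mul_le_mul_of_nonneg_right ha0 (abs_nonneg (β 1))
      have p4 := mul_le_mul_of_nonneg_right ha0 hSβ
      linarith
    · have hNpos : 0 < |N| := abs_pos.mpr hN
      have hN1 : 1 ≤ |N| := hNpos
      have h1 := slope_intmul α Sα hα N (β N)
      have h2 := slope_intmul α Sα hα (β N) N
      have h3 := slope_intmul β Sβ hβ N (α N)
      have h4 := slope_intmul β Sβ hβ (α N) N
      rw [mul_comm N (β N)] at h1
      rw [mul_comm N (α N)] at h3
      have t1 : |N * α (β N) - β N * α N| ≤ (|N| + 1) * Sα + (|β N| + 1) * Sα := by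
        have e3 : N * α (β N) - β N * α N
            = (α (β N * N) - β N * α N) - (α (β N * N) - N * α (β N)) := by ring
        rw [e3]
        exact le_trans (abs_sub _ _) (by linarith)
      have t2 : |N * β (α N) - α N * β N| ≤ (|N| + 1) * Sβ + (|α N| + 1) * Sβ := by
        have e4 : N * β (α N) - α N * β N
            = (β (α N * N) - α N * β N) - (β (α N * N) - N * β (α N)) := by ring
        rw [e4]
        exact le_trans (abs_sub _ _) (by linarith)
      have t3 : |N| * |α (β N) - β (α N)|
          ≤ (|N| + 1) * Sα + (|β N| + 1) * Sα + ((|N| + 1) * Sβ + (|α N| + 1) * Sβ) := by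
        have e5 : N * (α (β N) - β (α N))
            = (N * α (β N) - β N * α N) - (N * β (α N) - α N * β N) := by ring
        calc |N| * |α (β N) - β (α N)| = |N * (α (β N) - β (α N))| := (abs_mul _ _).symm
          _ = |(N * α (β N) - β N * α N) - (N * β (α N) - α N * β N)| := by rw [e5]
          _ ≤ |N * α (β N) - β N * α N| + |N * β (α N) - α N * β N| := abs_sub _ _
          _ ≤ _ := by linarith
      have hβlin := slope_lin β Sβ hβ N
      have hαlin := slope_lin α Sα hα N
      have key : |N| * |α (β N) - β (α N)| ≤ |N| * K + E := by
        rw [hKdef, hEdef]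
        have p1 := mul_le_mul_of_nonneg_left hβlin hSα
        have p2 := mul_le_mul_of_nonneg_left hαlin hSβ
        nlinarith [p1, p2]
      have key2 : |N| * |α (β N) - β (α N)| ≤ |N| * (K + E) := by
        have p1 := mul_le_mul_of_nonneg_left hN1 hE
        linarith
      exact le_of_mul_le_mul_left key2 hNpos
  -- the m-trick
  have main : ∀ n : ℤ, |α (β n) - β (α n)| ≤ K := by
    intro n
    set B := 2 * K + 2 * Sα + 2 * Sβ + E with hBdef
    have hB : 0 ≤ B := by linarith
    have claim : ∀ m : ℤ, 1 ≤ m → m * |α (β n) - β (α n)| ≤ m * K + B := by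
      intro m hm
      have hmabs : |m| = m := abs_of_pos (by omega)
      -- alpha side
      have a1 := slope_intmul α Sα hα m (β n)
      have a2 := slope_intmul β Sβ hβ m n
      set d : ℤ := β (m * n) - m * β n with hd
      have a2' : |d| ≤ (m + 1) * Sβ := by rw [hd]; rw [hmabs] at a2; exact a2
      have a3 := hα (m * β n) d
      have e1 : m * β n + d = β (m * n) := by rw [hd]; ring
      rw [e1] at a3
      have a4 := slope_lin α Sα hα d
      have aside : |m * α (β n) - α (β (m * n))|
          ≤ (m + 1) * Sα + Sα + (|d| * |α 1| + (|d| + 1) * Sα) := by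
        have e2 : m * α (β n) - α (β (m * n))
            = -(α (m * β n) - m * α (β n)) - (α (β (m * n)) - α (m * β n) - α d) - α d := by
          ring
        rw [e2]
        have u1 := abs_sub (-(α (m * β n) - m * α (β n)) - (α (β (m * n)) - α (m * β n) - α d)) (α d)
        have u2 := abs_sub (-(α (m * β n) - m * α (β n))) (α (β (m * n)) - α (m * β n) - α d)
        rw [abs_neg] at u2
        rw [hmabs] at a1
        linarith
      -- beta side
      have b1 := slope_intmul β Sβ hβ m (α n)
      have b2 := slope_intmul α Sα hα m n
      set d' : ℤ := α (m * n) - m * α n with hd'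
      have b2' : |d'| ≤ (m + 1) * Sα := by rw [hd']; rw [hmabs] at b2; exact b2
      have b3 := hβ (m * α n) d'
      have e1' : m * α n + d' = α (m * n) := by rw [hd']; ring
      rw [e1'] at b3
      have b4 := slope_lin β Sβ hβ d'
      have bside : |m * β (α n) - β (α (m * n))|
          ≤ (m + 1) * Sβ + Sβ + (|d'| * |β 1| + (|d'| + 1) * Sβ) := by
        have e2' : m * β (α n) - β (α (m * n))
            = -(β (m * α n) - m * β (α n)) - (β (α (m * n)) - β (m * α n) - β d') - β d' := by
          ring
        rw [e2']
        have u1 := abs_sub (-(β (m * α n) - m * β (α n)) - (β (α (m * n)) - β (m * α n) - β d')) (β d')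
        have u2 := abs_sub (-(β (m * α n) - m * β (α n))) (β (α (m * n)) - β (m * α n) - β d')
        rw [abs_neg] at u2
        rw [hmabs] at b1
        linarith
      have hcr := crude (m * n)
      have total : |m * (α (β n) - β (α n))|
          ≤ ((m + 1) * Sα + Sα + (|d| * |α 1| + (|d| + 1) * Sα))
            + ((m + 1) * Sβ + Sβ + (|d'| * |β 1| + (|d'| + 1) * Sβ)) + (K + E) := by
        have e6 : m * (α (β n) - β (α n))
            = (m * α (β n) - α (β (m * n))) - (m * β (α n) - β (α (m * n)))
              + (α (β (m * n)) - β (α (m * n))) := by ring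
        rw [e6]
        have u1 := abs_add_le ((m * α (β n) - α (β (m * n))) - (m * β (α n) - β (α (m * n))))
          (α (β (m * n)) - β (α (m * n)))
        have u2 := abs_sub (m * α (β n) - α (β (m * n))) (m * β (α n) - β (α (m * n)))
        linarith
      have lhs_eq : m * |α (β n) - β (α n)| = |m * (α (β n) - β (α n))| := by
        rw [abs_mul, hmabs]
      rw [lhs_eq]
      -- final arithmetic
      rw [hBdef, hKdef, hEdef]
      have p1 := mul_le_mul_of_nonneg_right a2' (abs_nonneg (α 1))
      have p2 := mul_le_mul_of_nonneg_right b2' (abs_nonneg (β 1))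
      have p3 := mul_le_mul_of_nonneg_right a2' hSα
      have p4 := mul_le_mul_of_nonneg_right b2' hSβ
      linarith
    by_contra hcon
    push_neg at hcon
    have hcon' : K + 1 ≤ |α (β n) - β (α n)| := Int.add_one_le_iff.mpr hcon
    have hm1 : (1 : ℤ) ≤ B + 1 := by linarith
    have := claim (B + 1) hm1
    have p1 := mul_le_mul_of_nonneg_left hcon' (show (0:ℤ) ≤ B + 1 by linarith)
    nlinarith
  refine ⟨main, K, fun n => ?_⟩
  simpa using main n
end

section
/- Let q be a positive integer and a, b, c integers with -q ≤ a - b - c ≤ q. Then -1 ≤ (a : 3q) - (b : 3q) - (c : 3q) ≤ 1, where p : q denotes optimal euclidean division, i.e. the unique integer r with 2p - |q| ≤ 2qr < 2p + |q|. -/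
/-- `r` is the result of optimal euclidean division of `p` by `q`:
the unique integer with `2p - |q| ≤ 2qr < 2p + |q|`. -/
def OptDiv (p q r : ℤ) : Prop :=
  2 * p - |q| ≤ 2 * q * r ∧ 2 * q * r < 2 * p + |q|

/-- If `-q ≤ a - b - c ≤ q` with `q > 0`, then the optimal euclidean divisions
of `a`, `b`, `c` by `3q` satisfy `-1 ≤ a:3q - b:3q - c:3q ≤ 1`. -/
theorem optDiv_three (q a b c ra rb rc : ℤ) (hq : 0 < q)
    (h₁ : -q ≤ a - b - c) (h₂ : a - b - c ≤ q)
    (ha : OptDiv a (3 * q) ra) (hb : OptDiv b (3 * q) rb)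
    (hc : OptDiv c (3 * q) rc) :
    -1 ≤ ra - rb - rc ∧ ra - rb - rc ≤ 1 := by
  have h3 : |3 * q| = 3 * q := abs_of_pos (by linarith)
  obtain ⟨ha1, ha2⟩ := ha
  obtain ⟨hb1, hb2⟩ := hb
  obtain ⟨hc1, hc2⟩ := hc
  rw [h3] at ha1 ha2 hb1 hb2 hc1 hc2
  constructor
  · by_contra h
    push_neg at h
    have : ra - rb - rc ≤ -2 := by linarith
    nlinarith
  · by_contra h
    push_neg at h
    have : 2 ≤ ra - rb - rc := by linarith
    nlinarith
end

section
/- Let λ be a well adjusted slope such that λ(k) > 1 for some positive integer k. Then for every v ∈ ℤ, the set {n ∈ ℤ | λ(n) = v} is finite with at most k elements. -/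
/-- A slope `λ : ℤ → ℤ` is well adjusted if it is odd and its defect lies in
`{-1, 0, 1}`. -/
def WellAdjusted (l : ℤ → ℤ) : Prop :=
  (∀ n : ℤ, l (-n) = -l n) ∧
    ∀ m n : ℤ, -1 ≤ l (m + n) - l m - l n ∧ l (m + n) - l m - l n ≤ 1

/-- If a well adjusted slope satisfies `λ k > 1` for some positive `k`, then
each value is taken at most `k` times. -/
theorem wellAdjusted_fibers_finite (l : ℤ → ℤ) (hl : WellAdjusted l)
    (k : ℤ) (hk : 0 < k) (hlk : 1 < l k) :
    ∀ v : ℤ, {n : ℤ | l n = v}.Finite ∧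
      ({n : ℤ | l n = v}.ncard : ℤ) ≤ k := by
  have step : ∀ n : ℤ, l n + 1 ≤ l (n + k) := by
    intro n
    have h := (hl.2 n k).1
    omega
  have grow : ∀ t : ℕ, ∀ n : ℤ, l n + t ≤ l (n + t * k) := by
    intro t
    induction t with
    | zero => intro n; simp
    | succ t ih =>
      intro n
      have h1 := ih n
      have h2 := step (n + (t : ℤ) * k)
      have e : n + ((t : ℕ) + 1 : ℤ) * k = (n + (t : ℤ) * k) + k := by ring
      push_cast
      push_cast at h1
      calc l n + ((t : ℤ) + 1) = (l n + t) + 1 := by ring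
        _ ≤ l (n + (t : ℤ) * k) + 1 := by linarith
        _ ≤ l ((n + (t : ℤ) * k) + k) := h2
        _ = l (n + ((t : ℤ) + 1) * k) := by ring_nf
  intro v
  have key : ∀ a b : ℤ, l a = v → l b = v → a < b → ¬ (k ∣ b - a) := by
    intro a b ha hb hab ⟨c, hc⟩
    have hc0 : 0 < c := by nlinarith
    have hgrow := grow c.toNat a
    have hct : ((c.toNat : ℤ)) = c := by omega
    rw [hct] at hgrow
    have e : a + c * k = b := by rw [mul_comm]; linarith
    rw [e] at hgrow
    omega
  haveI : NeZero k.toNat := ⟨by omega⟩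
  have hinj : Set.InjOn (fun n : ℤ => (n : ZMod k.toNat)) {n : ℤ | l n = v} := by
    intro a ha b hb hab
    simp only [Set.mem_setOf_eq] at ha hb
    have hdvd : (k.toNat : ℤ) ∣ b - a := by
      have := (ZMod.intCast_eq_intCast_iff a b k.toNat).mp hab
      exact Int.ModEq.dvd this
    rw [Int.toNat_of_nonneg hk.le] at hdvd
    rcases lt_trichotomy a b with h | h | h
    · exact absurd hdvd (key a b ha hb h)
    · exact h
    · exact absurd (dvd_neg.mpr hdvd) (by simpa using key b a hb ha h)
  have hfin : {n : ℤ | l n = v}.Finite := by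
    apply Set.Finite.of_finite_image _ hinj
    exact Set.toFinite _
  refine ⟨hfin, ?_⟩
  have h1 : {n : ℤ | l n = v}.ncard = ((fun n : ℤ => (n : ZMod k.toNat)) '' {n : ℤ | l n = v}).ncard :=
    (Set.ncard_image_of_injOn hinj).symm
  have h2 : ((fun n : ℤ => (n : ZMod k.toNat)) '' {n : ℤ | l n = v}).ncard ≤ k.toNat := by
    calc _ ≤ (Set.univ : Set (ZMod k.toNat)).ncard :=
          Set.ncard_le_ncard (Set.subset_univ _) Set.finite_univ
      _ = Nat.card (ZMod k.toNat) := Set.ncard_univ _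
      _ = k.toNat := by simp [Nat.card_eq_fintype_card, ZMod.card]
  omega
end

section
/- Let λ be a well adjusted slope with λ(k) > 1 for some k ∈ ℤ. Then for every v ∈ ℤ there exists n ∈ ℤ with |v - λ(n)| ≤ |λ(1)| + 1. -/
lemma wa_discrete_ivt (l : ℤ → ℤ) (D : ℤ) (hstep : ∀ n : ℤ, |l (n + 1) - l n| ≤ D)
    (v : ℤ) : ∀ N : ℕ, ∀ p q : ℤ, (q - p).natAbs = N → l p ≤ v → v ≤ l q →
    ∃ n, |v - l n| ≤ D := by
  intro N
  induction N using Nat.strong_induction_on with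
  | _ N ih =>
    intro p q hN hp hq
    by_cases h : |v - l p| ≤ D
    · exact ⟨p, h⟩
    · have hd0 : 0 ≤ D := le_trans (abs_nonneg _) (hstep 0)
      rw [abs_le] at h
      push_neg at h
      have hvp : D < v - l p := by omega
      rcases lt_trichotomy p q with hpq | hpq | hpq
      · have h1 := abs_le.mp (hstep p)
        exact ih (q - (p + 1)).natAbs (by omega) (p + 1) q rfl (by omega) hq
      · subst hpq; omega
      · have h1 := abs_le.mp (hstep (p - 1))
        rw [sub_add_cancel] at h1
        exact ih (q - (p - 1)).natAbs (by omega) (p - 1) q rfl (by omega) hq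

/-- If a well adjusted slope satisfies `λ k > 1` for some `k`, then every
integer `v` is within `|λ 1| + 1` of some value of `λ`. -/
theorem wellAdjusted_almost_surjective (l : ℤ → ℤ) (hl : WellAdjusted l)
    (k : ℤ) (hlk : 1 < l k) :
    ∀ v : ℤ, ∃ n : ℤ, |v - l n| ≤ |l 1| + 1 := by
  obtain ⟨hodd, hdef⟩ := hl
  have h0 : l 0 = 0 := by have := hodd 0; simp at this; omega
  have hstep : ∀ n : ℤ, |l (n + 1) - l n| ≤ |l 1| + 1 := by
    intro n
    have h1 := hdef n 1
    have h2 := le_abs_self (l 1)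
    have h3 := neg_abs_le (l 1)
    rw [abs_le]
    omega
  have hgrow : ∀ m : ℕ, (m : ℤ) ≤ l (m * k) := by
    intro m
    induction m with
    | zero => simp [h0]
    | succ m ih =>
      have h1 := hdef (m * k) k
      have : ((m : ℤ) + 1) * k = m * k + k := by ring
      push_cast
      rw [this]
      omega
  intro v
  set m : ℕ := v.natAbs with hm
  have hq : v ≤ l (m * k) := le_trans (by omega) (hgrow m)
  have hp : l (-(m * k)) ≤ v := by
    rw [hodd]
    have := hgrow m
    omega
  exact wa_discrete_ivt l (|l 1| + 1) hstep v ((m * k - -(m * k)).natAbs) (-(m * k)) (m * k)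
    rfl hp hq
end

section
/- The map ρ : ℤ → ℤ defined by ρ(n) = min{k ∈ ℕ | 2n² ≤ k²} for n > 0, ρ(0)=0, and ρ(-n) = -ρ(n), is a slope: for all n, m ∈ ℤ, |ρ(n+m) - ρ(n) - ρ(m)| ≤ 8. -/
/-- The odd map `ρ`, given for `n > 0` by
`ρ n = min {k ∈ ℕ | 2n² ≤ k²}`, is a slope with defect bounded by `8`. -/
theorem sqrt_two_slope (ρ : ℤ → ℤ)
    (hodd : ∀ n : ℤ, ρ (-n) = -ρ n)
    (hpos : ∀ n : ℤ, 0 < n →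
      0 ≤ ρ n ∧ 2 * n ^ 2 ≤ (ρ n) ^ 2 ∧
        ∀ k : ℤ, 0 ≤ k → 2 * n ^ 2 ≤ k ^ 2 → ρ n ≤ k) :
    ∀ n m : ℤ, |ρ (n + m) - ρ n - ρ m| ≤ 8 := by
  have hzero : ρ 0 = 0 := by
    have := hodd 0
    simp at this
    linarith
  have key : ∀ n : ℤ, 0 < n → |(ρ n : ℝ) - Real.sqrt 2 * n| ≤ 1 := by
    intro n hn
    obtain ⟨h0, h2, hmin⟩ := hpos n hn
    have hn' : (0 : ℝ) < (n : ℝ) := by exact_mod_cast hn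
    have hs2 : (0:ℝ) ≤ Real.sqrt 2 := Real.sqrt_nonneg 2
    have hsq : Real.sqrt 2 * Real.sqrt 2 = 2 := Real.mul_self_sqrt (by norm_num)
    -- lower bound: √2 n ≤ ρ n
    have hlow : Real.sqrt 2 * n ≤ (ρ n : ℝ) := by
      have hsq2 : (Real.sqrt 2 * n)^2 ≤ (ρ n : ℝ)^2 := by
        have : (2:ℝ) * (n:ℝ)^2 ≤ (ρ n : ℝ)^2 := by exact_mod_cast h2
        nlinarith
      exact (pow_le_pow_iff_left₀ (by positivity) (by exact_mod_cast h0) two_ne_zero).mp hsq2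
    -- ρ n ≥ 1
    have h1 : 1 ≤ ρ n := by
      by_contra h
      push_neg at h
      interval_cases hx : ρ n
      · simp at h2; nlinarith
    -- minimality: (ρ n - 1)^2 < 2 n^2
    have hsmall : (ρ n - 1)^2 < 2 * n^2 := by
      by_contra h
      push_neg at h
      have := hmin (ρ n - 1) (by omega) h
      omega
    -- upper bound: ρ n ≤ √2 n + 1
    have hup : (ρ n : ℝ) ≤ Real.sqrt 2 * n + 1 := by
      have hsm : ((ρ n : ℝ) - 1)^2 < 2 * (n:ℝ)^2 := by exact_mod_cast hsmall
      nlinarith [sq_nonneg (Real.sqrt 2 * n - ((ρ n : ℝ) - 1)),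
        mul_pos (by norm_num : (0:ℝ) < Real.sqrt 2) hn']
    rw [abs_le]
    constructor <;> linarith
  have keyall : ∀ n : ℤ, |(ρ n : ℝ) - Real.sqrt 2 * n| ≤ 1 := by
    intro n
    rcases lt_trichotomy n 0 with h | h | h
    · have := key (-n) (by omega)
      rw [hodd n] at this
      push_cast at this
      rw [show -(ρ n : ℝ) - Real.sqrt 2 * (-n) = -((ρ n : ℝ) - Real.sqrt 2 * n) by ring,
        abs_neg] at this
      exact this
    · subst h; simp [hzero]
    · exact key n h
  intro n m
  have h1 := keyall (n + m)
  push_cast at h1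
  have h2 := keyall n
  have h3 := keyall m
  have : |((ρ (n + m) - ρ n - ρ m : ℤ) : ℝ)| ≤ 3 := by
    push_cast
    have : ((ρ (n+m) : ℝ)) - ρ n - ρ m =
      ((ρ (n+m) : ℝ) - Real.sqrt 2 * (n+m)) - ((ρ n : ℝ) - Real.sqrt 2 * n)
        - ((ρ m : ℝ) - Real.sqrt 2 * m) := by push_cast; ring
    rw [this]
    calc _ ≤ |(ρ (n+m) : ℝ) - Real.sqrt 2 * (n+m)| + |(ρ n : ℝ) - Real.sqrt 2 * n|
        + |(ρ m : ℝ) - Real.sqrt 2 * m| := by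
          exact (abs_sub _ _).trans (by gcongr; exact abs_sub _ _)
      _ ≤ 3 := by linarith
  have h4 : |ρ (n + m) - ρ n - ρ m| ≤ 3 := by exact_mod_cast this
  omega
end

section
/- The slope ρ, defined by ρ(n) = min{k ∈ ℕ | 2n² ≤ k²} for n > 0 and extended to be odd, satisfies 2n ≤ ρ(ρ(n)) ≤ 2n + 2 for all positive n; hence ρ ∘ ρ is equivalent to the linear slope n ↦ 2n, i.e., ρ represents √2. -/
/-- The odd slope `ρ`, given for `n > 0` by `ρ n = min {k ∈ ℕ | 2n² ≤ k²}`,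
satisfies `2n ≤ ρ (ρ n) ≤ 2n + 2` for `n > 0`; hence `ρ ∘ ρ` is equivalent to
the linear slope `n ↦ 2n`, i.e. `ρ` represents `√2`. -/
theorem sqrt_two_squares_to_two (ρ : ℤ → ℤ)
    (hodd : ∀ n : ℤ, ρ (-n) = -ρ n)
    (hpos : ∀ n : ℤ, 0 < n →
      0 ≤ ρ n ∧ 2 * n ^ 2 ≤ (ρ n) ^ 2 ∧
        ∀ k : ℤ, 0 ≤ k → 2 * n ^ 2 ≤ k ^ 2 → ρ n ≤ k) :
    (∀ n : ℤ, 0 < n → 2 * n ≤ ρ (ρ n) ∧ ρ (ρ n) ≤ 2 * n + 2) ∧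
      ∃ C : ℤ, ∀ n : ℤ, |ρ (ρ n) - 2 * n| ≤ C := by
  have key : ∀ n : ℤ, 0 < n → 2 * n ≤ ρ (ρ n) ∧ ρ (ρ n) ≤ 2 * n + 2 := by
    intro n hn
    obtain ⟨hm0, hm2, hmmin⟩ := hpos n hn
    set m := ρ n with hm
    have hmpos : 0 < m := by nlinarith
    obtain ⟨hr0, hr2, hrmin⟩ := hpos m hmpos
    -- m ≤ 2n
    have hm2n : m ≤ 2 * n := hmmin (2 * n) (by linarith) (by nlinarith)
    -- (m-1)^2 < 2n^2
    have hm1 : ¬ (2 * n ^ 2 ≤ (m - 1) ^ 2) := by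
      intro h
      have := hmmin (m - 1) (by linarith) h
      linarith
    push_neg at hm1
    constructor
    · -- 2n ≤ ρ m since (ρ m)^2 ≥ 2 m^2 ≥ 4 n^2 = (2n)^2
      nlinarith
    · -- ρ m ≤ 2n+2 since 2 m^2 ≤ (2n+2)^2
      exact hrmin (2 * n + 2) (by linarith) (by nlinarith)
  refine ⟨key, 2, fun n => ?_⟩
  rcases lt_trichotomy n 0 with h | h | h
  · have hpn : 0 < -n := by linarith
    obtain ⟨h1, h2⟩ := key (-n) hpn
    have e1 : ρ n = -ρ (-n) := by
      have := hodd (-n); simp at this; linarith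
    have e2 : ρ (ρ n) = -ρ (ρ (-n)) := by
      rw [e1, hodd]
    rw [e2, abs_le]
    constructor <;> linarith
  · subst h
    have h0 : ρ 0 = 0 := by have := hodd 0; simp at this; linarith
    rw [h0, h0]
    norm_num
  · obtain ⟨h1, h2⟩ := key n h
    rw [abs_le]
    constructor <;> linarith
end

section
/- The odd map α : ℤ → ℤ defined by α(n) := min{k ∈ ℕ | 3n⁵ ≤ k⁵ + n⁴k} for n > 0 is a slope: |α(m+n) - α(m) - α(n)| ≤ 3 for all positive m, n. -/
private lemma qmono (q k l : ℤ) (h : k ≤ l) :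
    k ^ 5 + q ^ 4 * k ≤ l ^ 5 + q ^ 4 * l := by
  have h5 : k ^ 5 ≤ l ^ 5 := by
    nlinarith [sq_nonneg (2*k^2 + k*l), sq_nonneg (2*l^2 + k*l), sq_nonneg (k*l),
      mul_nonneg (mul_nonneg (sub_nonneg.2 h) (sub_nonneg.2 h)) (sq_nonneg (k+l))]
  nlinarith [sq_nonneg (q^2)]

/-- Cone lemma: the set of `(a, m)` with `3m⁵ ≤ a⁵ + m⁴a`, `m > 0`, is
upward closed in the slope `a/m`. -/
private lemma qcone (a m c p : ℤ) (hm : 0 < m) (hp : 0 < p)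
    (hf : 3 * m ^ 5 ≤ a ^ 5 + m ^ 4 * a) (hr : a * p ≤ c * m) :
    3 * p ^ 5 ≤ c ^ 5 + p ^ 4 * c := by
  have h1 := qmono (p * m) (a * p) (c * m) hr
  have hp5 : (0:ℤ) < p ^ 5 := pow_pos hp 5
  have h2 : p ^ 5 * (3 * m ^ 5) ≤ p ^ 5 * (a ^ 5 + m ^ 4 * a) :=
    mul_le_mul_of_nonneg_left hf hp5.le
  have h3 : m ^ 5 * (3 * p ^ 5) ≤ m ^ 5 * (c ^ 5 + p ^ 4 * c) := by nlinarith
  exact le_of_mul_le_mul_left h3 (pow_pos hm 5)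

private lemma qcone_lt (a m c p : ℤ) (hm : 0 < m) (hp : 0 < p)
    (hf : a ^ 5 + m ^ 4 * a < 3 * m ^ 5) (hr : c * m ≤ a * p) :
    c ^ 5 + p ^ 4 * c < 3 * p ^ 5 := by
  by_contra h
  push_neg at h
  have := qcone c p a m hp hm h hr
  linarith

/-- The odd map `α`, given for `n > 0` by
`α n = min {k ∈ ℕ | 3n⁵ ≤ k⁵ + n⁴k}`, is a slope:
`|α (m+n) - α m - α n| ≤ 3` for all positive `m, n`. -/
theorem quintic_root_slope (α : ℤ → ℤ)
    (hodd : ∀ n : ℤ, α (-n) = -α n)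
    (hpos : ∀ n : ℤ, 0 < n →
      0 ≤ α n ∧ 3 * n ^ 5 ≤ (α n) ^ 5 + n ^ 4 * α n ∧
        ∀ k : ℤ, 0 ≤ k → 3 * n ^ 5 ≤ k ^ 5 + n ^ 4 * k → α n ≤ k) :
    (∀ m n : ℤ, 0 < m → 0 < n → |α (m + n) - α m - α n| ≤ 3) ∧
      ∃ S : ℤ, ∀ m n : ℤ, |α (m + n) - α m - α n| ≤ S := by
  have key : ∀ m n : ℤ, 0 < m → 0 < n → |α (m + n) - α m - α n| ≤ 3 := by
    intro m n hm hn
    obtain ⟨ha0, hfa, hmina⟩ := hpos m hm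
    obtain ⟨hb0, hfb, hminb⟩ := hpos n hn
    have hmn : 0 < m + n := by linarith
    obtain ⟨hc0, hfc, hminc⟩ := hpos (m + n) hmn
    set a := α m with hadef
    set b := α n with hbdef
    set c := α (m + n) with hcdef
    -- a ≥ 1, b ≥ 1
    have ha1 : 1 ≤ a := by
      rcases eq_or_lt_of_le ha0 with h | h
      · exfalso; rw [← h] at hfa
        have : (0:ℤ) < m ^ 5 := pow_pos hm 5
        simp at hfa; nlinarith
      · linarith
    have hb1 : 1 ≤ b := by
      rcases eq_or_lt_of_le hb0 with h | h
      · exfalso; rw [← h] at hfb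
        have : (0:ℤ) < n ^ 5 := pow_pos hn 5
        simp at hfb; nlinarith
      · linarith
    -- failure at a - 1 and b - 1
    have hfa' : (a - 1) ^ 5 + m ^ 4 * (a - 1) < 3 * m ^ 5 := by
      by_contra h
      push_neg at h
      have := hmina (a - 1) (by linarith) h
      linarith
    have hfb' : (b - 1) ^ 5 + n ^ 4 * (b - 1) < 3 * n ^ 5 := by
      by_contra h
      push_neg at h
      have := hminb (b - 1) (by linarith) h
      linarith
    -- upper bound : c ≤ a + b
    have hub : c ≤ a + b := by
      rcases le_total (a * n) (b * m) with h | h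
      · exact hminc (a + b) (by linarith)
          (qcone a m (a + b) (m + n) hm hmn hfa (by nlinarith))
      · exact hminc (a + b) (by linarith)
          (qcone b n (a + b) (m + n) hn hmn hfb (by nlinarith))
    -- lower bound : a + b - 1 ≤ c
    have hlb : a + b - 1 ≤ c := by
      have hlt : (a + b - 2) ^ 5 + (m + n) ^ 4 * (a + b - 2) < 3 * (m + n) ^ 5 := by
        rcases le_total ((b - 1) * m) ((a - 1) * n) with h | h
        · exact qcone_lt (a - 1) m (a + b - 2) (m + n) hm hmn hfa' (by nlinarith)
        · exact qcone_lt (b - 1) n (a + b - 2) (m + n) hn hmn hfb' (by nlinarith)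
      by_contra h
      push_neg at h
      have hmono := qmono (m + n) c (a + b - 2) (by linarith)
      linarith
    rw [abs_le]
    constructor <;> linarith
  refine ⟨key, 3, ?_⟩
  have h0 : α 0 = 0 := by have := hodd 0; simp at this; linarith
  intro m n
  rcases lt_trichotomy m 0 with hm | hm | hm
  · rcases lt_trichotomy n 0 with hn | hn | hn
    · have := key (-m) (-n) (by linarith) (by linarith)
      rw [show -m + -n = -(m + n) by ring, hodd, hodd, hodd] at this
      rw [show α (m+n) - α m - α n = -(-α (m+n) - -α m - -α n) by ring, abs_neg]
      exact this
    · simp [hn, h0]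
    · rcases lt_trichotomy (m + n) 0 with hs | hs | hs
      · have h := key (-(m+n)) n (by linarith) hn
        rw [show -(m+n) + n = -m by ring, hodd, hodd] at h
        rw [show α (m+n) - α m - α n = -α m - -α (m+n) - α n by ring]
        exact h
      · rw [hs, h0, show n = -m by linarith, hodd]
        simp
      · have h := key (m+n) (-m) hs (by linarith)
        rw [show m + n + -m = n by ring, hodd] at h
        rw [show α (m+n) - α m - α n = -(α n - α (m+n) - -α m) by ring, abs_neg]
        exact h
  · simp [hm, h0]
  · rcases lt_trichotomy n 0 with hn | hn | hn
    · rcases lt_trichotomy (m + n) 0 with hs | hs | hs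
      · have h := key (-(m+n)) m (by linarith) hm
        rw [show -(m+n) + m = -n by ring, hodd, hodd] at h
        rw [show α (m+n) - α m - α n = -α n - -α (m+n) - α m by ring]
        exact h
      · rw [hs, h0, show n = -m by linarith, hodd]
        simp
      · have h := key (m+n) (-n) hs (by linarith)
        rw [show m + n + -n = m by ring, hodd] at h
        rw [show α (m+n) - α m - α n = -(α m - α (m+n) - -α n) by ring, abs_neg]
        exact h
    · simp [hn, h0]
    · exact key m n hm hn
end

section
/- Least upper bound property via slopes: let Δ be a nonempty set of well adjusted slopes and μ a well adjusted slope such that δ(n) < μ(n) + 2 for all δ ∈ Δ and n ∈ ℕ. Then the odd map σ defined by σ(n) := max{δ(n) | δ ∈ Δ} for n > 0 satisfies |σ(n+m) - σ(n) - σ(m)| ≤ 4 for all positive n, m; in particular σ is a slope. -/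
lemma wa_mul {δ : ℤ → ℤ} (h : WellAdjusted δ) (m : ℤ) {k : ℤ} (hk : 0 < k) :
    |δ (k * m) - k * δ m| ≤ k - 1 := by
  obtain ⟨j, rfl⟩ : ∃ j : ℕ, k = (j : ℤ) + 1 := ⟨(k - 1).toNat, by omega⟩
  clear hk
  induction j with
  | zero => simp
  | succ j ih =>
    have h1 := (h.2 (((j : ℤ) + 1) * m) m).1
    have h2 := (h.2 (((j : ℤ) + 1) * m) m).2
    rw [abs_le] at ih ⊢
    have e : (((j + 1 : ℕ) : ℤ) + 1) * m = ((j : ℤ) + 1) * m + m := by push_cast; ring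
    rw [e]
    push_cast
    constructor <;> nlinarith [ih.1, ih.2]

lemma wa_key {δ δ' : ℤ → ℤ} (hδ : WellAdjusted δ) (hδ' : WellAdjusted δ')
    {n m : ℤ} (hn : 0 < n) (hm : 0 < m)
    (h1 : δ m + 2 ≤ δ' m) (h2 : δ' n + 2 ≤ δ n) : False := by
  have a1 := abs_le.1 (wa_mul hδ m hn)
  have a2 := abs_le.1 (wa_mul hδ' m hn)
  have a3 := abs_le.1 (wa_mul hδ n hm)
  have a4 := abs_le.1 (wa_mul hδ' n hm)
  rw [mul_comm n m] at a1 a2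
  have p1 : n * (δ m + 2) ≤ n * δ' m := mul_le_mul_of_nonneg_left h1 (by linarith)
  have p2 : m * (δ' n + 2) ≤ m * δ n := mul_le_mul_of_nonneg_left h2 (by linarith)
  linarith [a1.1, a1.2, a2.1, a2.2, a3.1, a3.2, a4.1, a4.2]

/-- Completeness via slopes: if `Δ` is a nonempty set of well adjusted slopes
uniformly dominated by `μ n + 2`, then the odd map `σ` given on positive `n`
by `σ n = max {δ n | δ ∈ Δ}` has defect bounded by `4` on positive integers;
in particular `σ` is a slope. -/
theorem sup_slope (Δ : Set (ℤ → ℤ)) (hne : Δ.Nonempty)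
    (hΔ : ∀ δ ∈ Δ, WellAdjusted δ) (μ : ℤ → ℤ) (hμ : WellAdjusted μ)
    (hbd : ∀ δ ∈ Δ, ∀ n : ℕ, δ n < μ n + 2)
    (σ : ℤ → ℤ) (hσodd : ∀ n : ℤ, σ (-n) = -σ n)
    (hσ : ∀ n : ℤ, 0 < n → (∃ δ ∈ Δ, σ n = δ n) ∧ ∀ δ ∈ Δ, δ n ≤ σ n) :
    (∀ n m : ℤ, 0 < n → 0 < m → |σ (n + m) - σ n - σ m| ≤ 4) ∧
      ∃ S : ℤ, ∀ n m : ℤ, |σ (n + m) - σ n - σ m| ≤ S := by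
  have h0 : σ 0 = 0 := by have := hσodd 0; simp at this; linarith
  have main : ∀ n m : ℤ, 0 < n → 0 < m → |σ (n + m) - σ n - σ m| ≤ 4 := by
    intro n m hn hm
    rw [abs_le]
    constructor
    · -- lower bound
      obtain ⟨δ, hδΔ, hδn⟩ := (hσ n hn).1
      obtain ⟨δ', hδ'Δ, hδ'm⟩ := (hσ m hm).1
      have hwδ := hΔ δ hδΔ
      have hwδ' := hΔ δ' hδ'Δ
      have hδnm := (hσ (n + m) (by linarith)).2 δ hδΔ
      have hδ'nm := (hσ (n + m) (by linarith)).2 δ' hδ'Δ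
      have d1 := (hwδ.2 n m).1
      have d2 := (hwδ'.2 n m).1
      have hδm := (hσ m hm).2 δ hδΔ
      have hδ'n := (hσ n hn).2 δ' hδ'Δ
      by_cases hc : δ m + 2 ≤ δ' m
      · -- then δ' n must be close to δ n by wa_key
        have : ¬ (δ' n + 2 ≤ δ n) := fun h => wa_key hwδ hwδ' hn hm hc h
        push_neg at this
        -- σ (n+m) ≥ δ' (n+m) ≥ δ' n + δ' m - 1 ≥ (σ n - 1) + σ m - 1
        linarith
      · push_neg at hc
        -- σ (n+m) ≥ δ (n+m) ≥ δ n + δ m - 1 ≥ σ n + (σ m - 1) - 1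
        linarith
    · -- upper bound
      obtain ⟨δ, hδΔ, hδnm⟩ := (hσ (n + m) (by linarith)).1
      have hwδ := hΔ δ hδΔ
      have d := (hwδ.2 n m).2
      have h1 := (hσ n hn).2 δ hδΔ
      have h2 := (hσ m hm).2 δ hδΔ
      linarith
  refine ⟨main, 4, ?_⟩
  -- helper for n > 0, m < 0
  have aux : ∀ n m : ℤ, 0 < n → m < 0 → |σ (n + m) - σ n - σ m| ≤ 4 := by
    intro n m hn hm
    rcases lt_trichotomy 0 (n + m) with hs | hs | hs
    · have h := main (n + m) (-m) hs (by linarith)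
      have e : σ (n + m) - σ n - σ m =
          -(σ ((n + m) + -m) - σ (n + m) - σ (-m)) := by
        rw [show (n + m) + -m = n by ring, hσodd]; ring
      rw [e, abs_neg]; exact h
    · have e : σ (n + m) - σ n - σ m = 0 := by
        rw [← hs, h0, show m = -n by linarith, hσodd]; ring
      rw [e]; norm_num
    · have h := main n (-(n + m)) hn (by linarith)
      have e : σ (n + m) - σ n - σ m =
          σ (n + -(n + m)) - σ n - σ (-(n + m)) := by
        rw [show n + -(n + m) = -m by ring, hσodd, hσodd]; ring
      rw [e]; exact h
  intro n m
  rcases lt_trichotomy 0 n with hn | hn | hn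
  · rcases lt_trichotomy 0 m with hm | hm | hm
    · exact main n m hn hm
    · rw [← hm, add_zero, h0]; simp
    · exact aux n m hn hm
  · rw [← hn, zero_add, h0]
    simp
  · rcases lt_trichotomy 0 m with hm | hm | hm
    · have h := aux m n hm hn
      rw [show m + n = n + m by ring] at h
      calc |σ (n + m) - σ n - σ m| = |σ (n + m) - σ m - σ n| := by ring_nf
        _ ≤ 4 := h
    · rw [← hm, add_zero, h0]; simp
    · have h := main (-n) (-m) (by linarith) (by linarith)
      have e : σ (n + m) - σ n - σ m =
          -(σ (-n + -m) - σ (-n) - σ (-m)) := by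
        rw [show -n + -m = -(n + m) by ring, hσodd, hσodd, hσodd]; ring
      rw [e, abs_neg]; exact h
end
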